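/- arXiv:math/9904027 — 11 statements merged into one kernel-verified Lean document; each statement's English description precedes it below -/
import Mathlib

section
/- Under the quantum Euclidean space relations, the element r² is central in the subalgebra generated by the coordinates: r²·x⁻ = x⁻·r², r²·x⁰ = x⁰·r², and r²·x⁺ = x⁺·r². -/
theorem stmt0 {K A : Type*} [Field K] [CharZero K] [Ring A] [Algebra K A]
    (q s : K) (hq : q ≠ 0) (hs : s ≠ 0) (hsq : s ^ 2 = q)
    (xm x0 xp : A)
    (hx1 : xm * x0 = q • (x0 * xm))
    (hx2 : xp * x0 = q⁻¹ • (x0 * xp))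
    (hx3 : xp * xm - xm * xp = (s - s⁻¹) • (x0 * x0))
    (r2 : A) (hr2 : r2 = s⁻¹ • (xm * xp) + x0 * x0 + s • (xp * xm)) :
    r2 * xm = xm * r2 ∧ r2 * x0 = x0 * r2 ∧ r2 * xp = xp * r2 := by
  subst hr2
  subst hsq
  have gm : ∀ b : A, xm * (x0 * b) = (s ^ 2) • (x0 * (xm * b)) := by
    intro b; rw [← mul_assoc, hx1, smul_mul_assoc, mul_assoc]
  have gp : ∀ b : A, xp * (x0 * b) = (s ^ 2)⁻¹ • (x0 * (xp * b)) := by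
    intro b; rw [← mul_assoc, hx2, smul_mul_assoc, mul_assoc]
  have comm : xp * xm = (s - s⁻¹) • (x0 * x0) + xm * xp := by
    rw [← hx3]; noncomm_ring
  have comm' : ∀ b : A, xp * (xm * b) = (s - s⁻¹) • (x0 * (x0 * b)) + xm * (xp * b) := by
    intro b; rw [← mul_assoc, comm, add_mul, smul_mul_assoc, mul_assoc, mul_assoc]
  refine ⟨?_, ?_, ?_⟩ <;>
  · simp only [mul_add, add_mul, smul_mul_assoc, mul_smul_comm, smul_add, smul_smul,
      mul_assoc, comm', comm, gm, gp, hx1, hx2]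
    match_scalars <;> field_simp <;> ring
end

section
/- The invariant 1-form η satisfies [η, x^i] = −q⁻²(q−1)·r²·ξ^i for each i ∈ {−,0,+}; consequently (q−1)⁻¹q²r⁻²·η is the 'Dirac operator' of the calculus, i.e. dx^i = −[θ, x^i] with θ = (q−1)⁻¹q²r⁻²η. -/
set_option maxHeartbeats 40000000 in
theorem stmt6 {K A : Type*} [Field K] [CharZero K] [Ring A] [Algebra K A]
    (q s : K) (hq : q ≠ 0) (hs : s ≠ 0) (hsq : s ^ 2 = q)
    (xm x0 xp : A)
    (hx1 : xm * x0 = q • (x0 * xm))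
    (hx2 : xp * x0 = q⁻¹ • (x0 * xp))
    (hx3 : xp * xm - xm * xp = (s - s⁻¹) • (x0 * x0))
    (r2 : A) (hr2 : r2 = s⁻¹ • (xm * xp) + x0 * x0 + s • (xp * xm))
    (ξm ξ0 ξp : A)
    (hc1 : xm * ξm = (q ^ 2) • (ξm * xm))
    (hc2 : x0 * ξm = q • (ξm * x0))
    (hc3 : xp * ξm = ξm * xp)
    (hc4 : xm * ξ0 = q • (ξ0 * xm) + (q ^ 2 - 1) • (ξm * x0))
    (hc5 : x0 * ξ0 = q • (ξ0 * x0) - ((s - s⁻¹) * (q + 1)) • (ξm * xp))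
    (hc6 : xp * ξ0 = q • (ξ0 * xp))
    (hc7 : xm * ξp = ξp * xm - ((s - s⁻¹) * (q + 1)) • (ξ0 * x0) + ((s - s⁻¹) ^ 2 * (q + 1)) • (ξm * xp))
    (hc8 : x0 * ξp = q • (ξp * x0) + (q ^ 2 - 1) • (ξ0 * xp))
    (hc9 : xp * ξp = (q ^ 2) • (ξp * xp))
    (η : A) (hη : η = s⁻¹ • (xm * ξp) + x0 * ξ0 + s • (xp * ξm)) :
    η * xm - xm * η = (-(q⁻¹ * q⁻¹ * (q - 1))) • (r2 * ξm) ∧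
    η * x0 - x0 * η = (-(q⁻¹ * q⁻¹ * (q - 1))) • (r2 * ξ0) ∧
    η * xp - xp * η = (-(q⁻¹ * q⁻¹ * (q - 1))) • (r2 * ξp) := by
  subst hsq
  -- x-relations, rearranged and "tail" versions
  have hx3' : xp * xm = xm * xp + (s - s⁻¹) • (x0 * x0) := by
    rw [← hx3]; abel
  have tx1 : ∀ y : A, xm * (x0 * y) = (s ^ 2) • (x0 * (xm * y)) := fun y => by
    rw [← mul_assoc, hx1, smul_mul_assoc, mul_assoc]
  have tx2 : ∀ y : A, xp * (x0 * y) = (s ^ 2)⁻¹ • (x0 * (xp * y)) := fun y => by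
    rw [← mul_assoc, hx2, smul_mul_assoc, mul_assoc]
  have tx3 : ∀ y : A, xp * (xm * y) = xm * (xp * y) + (s - s⁻¹) • (x0 * (x0 * y)) := fun y => by
    rw [← mul_assoc, hx3', add_mul, smul_mul_assoc, mul_assoc, mul_assoc]
  -- tail versions of the calculus relations
  have t1 : ∀ y : A, xm * (ξm * y) = ((s ^ 2) ^ 2) • (ξm * (xm * y)) := fun y => by
    rw [← mul_assoc, hc1, smul_mul_assoc, mul_assoc]
  have t2 : ∀ y : A, x0 * (ξm * y) = (s ^ 2) • (ξm * (x0 * y)) := fun y => by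
    rw [← mul_assoc, hc2, smul_mul_assoc, mul_assoc]
  have t3 : ∀ y : A, xp * (ξm * y) = ξm * (xp * y) := fun y => by
    rw [← mul_assoc, hc3, mul_assoc]
  have t4 : ∀ y : A, xm * (ξ0 * y)
      = (s ^ 2) • (ξ0 * (xm * y)) + ((s ^ 2) ^ 2 - 1) • (ξm * (x0 * y)) := fun y => by
    rw [← mul_assoc, hc4, add_mul, smul_mul_assoc, smul_mul_assoc, mul_assoc, mul_assoc]
  have t5 : ∀ y : A, x0 * (ξ0 * y)
      = (s ^ 2) • (ξ0 * (x0 * y)) - ((s - s⁻¹) * (s ^ 2 + 1)) • (ξm * (xp * y)) := fun y => by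
    rw [← mul_assoc, hc5, sub_mul, smul_mul_assoc, smul_mul_assoc, mul_assoc, mul_assoc]
  have t6 : ∀ y : A, xp * (ξ0 * y) = (s ^ 2) • (ξ0 * (xp * y)) := fun y => by
    rw [← mul_assoc, hc6, smul_mul_assoc, mul_assoc]
  have t7 : ∀ y : A, xm * (ξp * y)
      = ξp * (xm * y) - ((s - s⁻¹) * (s ^ 2 + 1)) • (ξ0 * (x0 * y))
        + ((s - s⁻¹) ^ 2 * (s ^ 2 + 1)) • (ξm * (xp * y)) := fun y => by
    rw [← mul_assoc, hc7, add_mul, sub_mul, smul_mul_assoc, smul_mul_assoc,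
      mul_assoc, mul_assoc, mul_assoc]
  have t8 : ∀ y : A, x0 * (ξp * y)
      = (s ^ 2) • (ξp * (x0 * y)) + ((s ^ 2) ^ 2 - 1) • (ξ0 * (xp * y)) := fun y => by
    rw [← mul_assoc, hc8, add_mul, smul_mul_assoc, smul_mul_assoc, mul_assoc, mul_assoc]
  have t9 : ∀ y : A, xp * (ξp * y) = ((s ^ 2) ^ 2) • (ξp * (xp * y)) := fun y => by
    rw [← mul_assoc, hc9, smul_mul_assoc, mul_assoc]
  have zi : s⁻¹ = s ^ (-1 : ℤ) := by rw [zpow_neg, zpow_one]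
  refine ⟨?_, ?_, ?_⟩ <;>
  · rw [hη, hr2]
    simp only [add_mul, sub_mul, mul_add, mul_sub, smul_mul_assoc, mul_smul_comm,
      smul_add, smul_sub, smul_smul, mul_assoc,
      hc1, hc2, hc3, hc4, hc5, hc6, hc7, hc8, hc9,
      hx1, hx2, hx3',
      t1, t2, t3, t4, t5, t6, t7, t8, t9, tx1, tx2, tx3]
    match_scalars
    all_goals try ring
    all_goals apply mul_left_cancel₀ (pow_ne_zero 100 hs)
    all_goals ring_nf
    all_goals simp only [zi, ← zpow_natCast, ← zpow_mul, ← zpow_add₀ hs]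
    all_goals try norm_num
    all_goals try ring
end

section
/- The differential of r², namely dr² = g_{ij}(ξ^i x^j + x^i ξ^j), equals (q+1)·η; explicitly: s⁻¹·(ξ⁻x⁺ + x⁻ξ⁺) + (ξ⁰x⁰ + x⁰ξ⁰) + s·(ξ⁺x⁻ + x⁺ξ⁻) = (q+1)·η. (Equivalently dr² = (1 − q⁻²)·r²·θ for the Dirac operator θ = (q−1)⁻¹q²r⁻²η.) -/
theorem stmt7 {K A : Type*} [Field K] [CharZero K] [Ring A] [Algebra K A]
    (q s : K) (hq : q ≠ 0) (hs : s ≠ 0) (hsq : s ^ 2 = q)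
    (xm x0 xp : A)
    (hx1 : xm * x0 = q • (x0 * xm))
    (hx2 : xp * x0 = q⁻¹ • (x0 * xp))
    (hx3 : xp * xm - xm * xp = (s - s⁻¹) • (x0 * x0))
    (ξm ξ0 ξp : A)
    (hc1 : xm * ξm = (q ^ 2) • (ξm * xm))
    (hc2 : x0 * ξm = q • (ξm * x0))
    (hc3 : xp * ξm = ξm * xp)
    (hc4 : xm * ξ0 = q • (ξ0 * xm) + (q ^ 2 - 1) • (ξm * x0))
    (hc5 : x0 * ξ0 = q • (ξ0 * x0) - ((s - s⁻¹) * (q + 1)) • (ξm * xp))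
    (hc6 : xp * ξ0 = q • (ξ0 * xp))
    (hc7 : xm * ξp = ξp * xm - ((s - s⁻¹) * (q + 1)) • (ξ0 * x0) + ((s - s⁻¹) ^ 2 * (q + 1)) • (ξm * xp))
    (hc8 : x0 * ξp = q • (ξp * x0) + (q ^ 2 - 1) • (ξ0 * xp))
    (hc9 : xp * ξp = (q ^ 2) • (ξp * xp))
    (η : A) (hη : η = s⁻¹ • (xm * ξp) + x0 * ξ0 + s • (xp * ξm)) :
    s⁻¹ • (ξm * xp + xm * ξp) + (ξ0 * x0 + x0 * ξ0) + s • (ξp * xm + xp * ξm)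
      = (q + 1) • η := by
  subst hsq hη
  rw [hc7, hc5, hc3]
  match_scalars <;> field_simp <;> ring
end

section
/- Each frame element commutes with the coordinates: x^i·θ^a = θ^a·x^i for all i, a ∈ {−,0,+}, where θ⁻ := α⁻¹·Λ'vξ⁻, θ⁰ := α⁻¹·Λ'ρ'(s(q+1)·vx⁺ξ⁻ + ξ⁰), θ⁺ := α⁻¹·Λ'ρ'²(−sq(q+1)·v(x⁺)²ξ⁻ − (q+1)·x⁺ξ⁰ + x⁰ξ⁺). Thus the θ^a constitute a frame (Stehbein) for the differential calculus on the extended quantum Euclidean space. -/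
/-!
Write θ^a = α⁻¹ Λ⁻¹ r⁻ᵏ ω^a with k = 0, 1, 2. Since x^i Λ = q Λ x^i and x^i r = r x^i, we get
x^i Λ⁻¹ = q⁻¹ Λ⁻¹ x^i, so x^i θ^a = θ^a x^i is equivalent to the q-commutation x^i ω^a = q ω^a x^i.
These nine identities are checked by normal ordering: every x^i is moved to the left of the
ξ^b and every (x⁰)⁻¹ to the left of the x^i, after which the coefficients of the ordered monomials
agree as Laurent polynomials in √q.
-/

section

variable {K A : Type*} [Field K] [Ring A] [Algebra K A]

theorem mul_inv_eq_inv_smul_of_mul_eq_smul {c : K} (hc : c ≠ 0) {a u u' : A}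
    (hu : u * u' = 1) (hu' : u' * u = 1) (h : a * u = c • (u * a)) :
    a * u' = c⁻¹ • (u' * a) := by
  rw [eq_inv_smul_iff₀ hc]
  calc c • (a * u') = u' * (c • (u * a)) * u' := by
        rw [mul_smul_comm, smul_mul_assoc, ← mul_assoc, hu', one_mul]
    _ = u' * a := by rw [← h, mul_assoc, mul_assoc, hu, mul_one]

theorem commute_smul_mul_mul {c : K} (hc : c ≠ 0) {x L L' r ω : A} (hL : L * L' = 1)
    (hL' : L' * L = 1) (hxL : x * L = c • (L * x)) (hxr : Commute x r)
    (hxω : x * ω = c • (ω * x)) (a : K) : Commute x (a • (L' * r * ω)) := by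
  refine Commute.smul_right (smul_right_injective A hc ?_) a
  have hxL' := mul_inv_eq_inv_smul_of_mul_eq_smul hc hL hL' hxL
  calc c • (x * (L' * r * ω)) = L' * r * (x * ω) := by
        rw [← mul_assoc, ← mul_assoc, hxL', smul_mul_assoc, smul_mul_assoc, smul_smul,
          mul_inv_cancel₀ hc, one_smul, mul_assoc L', hxr.eq, ← mul_assoc, mul_assoc]
    _ = c • (L' * r * ω * x) := by simp only [hxω, mul_smul_comm, mul_assoc]

structure IsQuantumEuclideanSpace (q s : K) (xm x0 xp : A) : Prop where
  xm_mul_x0 : xm * x0 = q • (x0 * xm)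
  xp_mul_x0 : xp * x0 = q⁻¹ • (x0 * xp)
  xp_mul_xm_sub_xm_mul_xp : xp * xm - xm * xp = (s - s⁻¹) • (x0 * x0)

structure IsCovariantCalculus (q s : K) (xm x0 xp ξm ξ0 ξp : A) : Prop where
  xm_mul_ξm : xm * ξm = (q ^ 2) • (ξm * xm)
  x0_mul_ξm : x0 * ξm = q • (ξm * x0)
  xp_mul_ξm : xp * ξm = ξm * xp
  xm_mul_ξ0 : xm * ξ0 = q • (ξ0 * xm) + (q ^ 2 - 1) • (ξm * x0)
  x0_mul_ξ0 : x0 * ξ0 = q • (ξ0 * x0) - ((s - s⁻¹) * (q + 1)) • (ξm * xp)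
  xp_mul_ξ0 : xp * ξ0 = q • (ξ0 * xp)
  xm_mul_ξp : xm * ξp = ξp * xm - ((s - s⁻¹) * (q + 1)) • (ξ0 * x0)
    + ((s - s⁻¹) ^ 2 * (q + 1)) • (ξm * xp)
  x0_mul_ξp : x0 * ξp = q • (ξp * x0) + (q ^ 2 - 1) • (ξ0 * xp)
  xp_mul_ξp : xp * ξp = (q ^ 2) • (ξp * xp)

namespace IsQuantumEuclideanSpace

variable {q s : K} {xm x0 xp : A}

theorem xm_mul_x0_mul (hX : IsQuantumEuclideanSpace q s xm x0 xp) (y : A) :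
    xm * (x0 * y) = q • (x0 * (xm * y)) := by
  rw [← mul_assoc, hX.xm_mul_x0, smul_mul_assoc, mul_assoc]

theorem xp_mul_x0_mul (hX : IsQuantumEuclideanSpace q s xm x0 xp) (y : A) :
    xp * (x0 * y) = q⁻¹ • (x0 * (xp * y)) := by
  rw [← mul_assoc, hX.xp_mul_x0, smul_mul_assoc, mul_assoc]

theorem xp_mul_xm_mul (hX : IsQuantumEuclideanSpace q s xm x0 xp) (y : A) :
    xp * (xm * y) = xm * (xp * y) + (s - s⁻¹) • (x0 * (x0 * y)) := by
  rw [← mul_assoc, ← mul_assoc, ← mul_assoc, ← smul_mul_assoc, ← add_mul,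
    ← hX.xp_mul_xm_sub_xm_mul_xp, add_sub_cancel]

theorem xm_mul_inv_mul (hX : IsQuantumEuclideanSpace q s xm x0 xp) (hq : q ≠ 0) {v : A}
    (hv1 : x0 * v = 1) (hv2 : v * x0 = 1) (y : A) : xm * (v * y) = q⁻¹ • (v * (xm * y)) := by
  rw [← mul_assoc, mul_inv_eq_inv_smul_of_mul_eq_smul hq hv1 hv2 hX.xm_mul_x0, smul_mul_assoc,
    mul_assoc]

theorem xp_mul_inv_mul (hX : IsQuantumEuclideanSpace q s xm x0 xp) (hq : q ≠ 0) {v : A}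
    (hv1 : x0 * v = 1) (hv2 : v * x0 = 1) (y : A) : xp * (v * y) = q • (v * (xp * y)) := by
  rw [← mul_assoc, mul_inv_eq_inv_smul_of_mul_eq_smul (inv_ne_zero hq) hv1 hv2 hX.xp_mul_x0,
    inv_inv, smul_mul_assoc, mul_assoc]

end IsQuantumEuclideanSpace

namespace IsCovariantCalculus

variable {q s : K} {xm x0 xp ξm ξ0 ξp : A}

theorem ξm_mul_xm (hξ : IsCovariantCalculus q s xm x0 xp ξm ξ0 ξp) (hq : q ≠ 0) :
    ξm * xm = (q ^ 2)⁻¹ • (xm * ξm) :=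
  (eq_inv_smul_iff₀ (pow_ne_zero 2 hq)).2 hξ.xm_mul_ξm.symm

theorem ξm_mul_x0 (hξ : IsCovariantCalculus q s xm x0 xp ξm ξ0 ξp) (hq : q ≠ 0) :
    ξm * x0 = q⁻¹ • (x0 * ξm) :=
  (eq_inv_smul_iff₀ hq).2 hξ.x0_mul_ξm.symm

theorem ξm_mul_xp (hξ : IsCovariantCalculus q s xm x0 xp ξm ξ0 ξp) : ξm * xp = xp * ξm :=
  hξ.xp_mul_ξm.symm

theorem ξ0_mul_xm (hξ : IsCovariantCalculus q s xm x0 xp ξm ξ0 ξp) (hq : q ≠ 0) :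
    ξ0 * xm = q⁻¹ • (xm * ξ0 - (q ^ 2 - 1) • (ξm * x0)) :=
  (eq_inv_smul_iff₀ hq).2 (by rw [hξ.xm_mul_ξ0, add_sub_cancel_right])

theorem ξ0_mul_x0 (hξ : IsCovariantCalculus q s xm x0 xp ξm ξ0 ξp) (hq : q ≠ 0) :
    ξ0 * x0 = q⁻¹ • (x0 * ξ0 + ((s - s⁻¹) * (q + 1)) • (ξm * xp)) :=
  (eq_inv_smul_iff₀ hq).2 (by rw [hξ.x0_mul_ξ0, sub_add_cancel])

theorem ξ0_mul_xp (hξ : IsCovariantCalculus q s xm x0 xp ξm ξ0 ξp) (hq : q ≠ 0) :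
    ξ0 * xp = q⁻¹ • (xp * ξ0) :=
  (eq_inv_smul_iff₀ hq).2 hξ.xp_mul_ξ0.symm

theorem ξp_mul_xm (hξ : IsCovariantCalculus q s xm x0 xp ξm ξ0 ξp) :
    ξp * xm = xm * ξp + ((s - s⁻¹) * (q + 1)) • (ξ0 * x0)
      - ((s - s⁻¹) ^ 2 * (q + 1)) • (ξm * xp) := by
  rw [hξ.xm_mul_ξp]; abel

theorem ξp_mul_x0 (hξ : IsCovariantCalculus q s xm x0 xp ξm ξ0 ξp) (hq : q ≠ 0) :
    ξp * x0 = q⁻¹ • (x0 * ξp - (q ^ 2 - 1) • (ξ0 * xp)) :=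
  (eq_inv_smul_iff₀ hq).2 (by rw [hξ.x0_mul_ξp, add_sub_cancel_right])

theorem ξp_mul_xp (hξ : IsCovariantCalculus q s xm x0 xp ξm ξ0 ξp) (hq : q ≠ 0) :
    ξp * xp = (q ^ 2)⁻¹ • (xp * ξp) :=
  (eq_inv_smul_iff₀ (pow_ne_zero 2 hq)).2 hξ.xp_mul_ξp.symm

end IsCovariantCalculus

theorem coord_mul_frameNumerator {q s : K} {xm x0 xp ξm ξ0 ξp v : A}
    (hX : IsQuantumEuclideanSpace q s xm x0 xp) (hξ : IsCovariantCalculus q s xm x0 xp ξm ξ0 ξp)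
    (hsq : s ^ 2 = q) (hs : s ≠ 0) (hv1 : x0 * v = 1) (hv2 : v * x0 = 1) :
    ∀ x ∈ ({xm, x0, xp} : Set A), ∀ ω ∈ ({v * ξm, (s * (q + 1)) • (v * xp * ξm) + ξ0,
      (-(s * q * (q + 1))) • (v * (xp * xp) * ξm) - (q + 1) • (xp * ξ0) + x0 * ξp} : Set A),
      x * ω = q • (ω * x) := by
  have hq : q ≠ 0 := hsq ▸ pow_ne_zero 2 hs
  have hvl (y : A) : x0 * (v * y) = y := by rw [← mul_assoc, hv1, one_mul]
  have hvr (y : A) : v * (x0 * y) = y := by rw [← mul_assoc, hv2, one_mul]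
  intro x hx ω hω
  simp only [Set.mem_insert_iff, Set.mem_singleton_iff] at hx hω
  rcases hx with rfl | rfl | rfl <;> rcases hω with rfl | rfl | rfl <;>
    simp only [mul_add, add_mul, mul_sub, sub_mul, smul_add, smul_sub, mul_smul_comm,
      smul_mul_assoc, smul_smul, neg_smul, mul_neg, neg_mul, smul_neg, mul_assoc, hvl, hvr,
      hX.xm_mul_x0_mul, hX.xp_mul_x0_mul, hX.xp_mul_xm_mul, hX.xm_mul_inv_mul hq hv1 hv2,
      hX.xp_mul_inv_mul hq hv1 hv2, hξ.ξm_mul_xm hq, hξ.ξm_mul_x0 hq, hξ.ξm_mul_xp,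
      hξ.ξ0_mul_xm hq, hξ.ξ0_mul_x0 hq, hξ.ξ0_mul_xp hq, hξ.ξp_mul_xm, hξ.ξp_mul_x0 hq,
      hξ.ξp_mul_xp hq] <;>
    match_scalars <;> subst hsq <;> field_simp <;> ring

end

theorem stmt9_general {K A : Type*} [Field K] [Ring A] [Algebra K A]
    (q s : K) (hq : q ≠ 0) (hs : s ≠ 0) (hsq : s ^ 2 = q)
    (xm x0 xp : A)
    (hx1 : xm * x0 = q • (x0 * xm))
    (hx2 : xp * x0 = q⁻¹ • (x0 * xp))
    (hx3 : xp * xm - xm * xp = (s - s⁻¹) • (x0 * x0))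
    (α : K)
    (ξm ξ0 ξp : A)
    (hc1 : xm * ξm = (q ^ 2) • (ξm * xm))
    (hc2 : x0 * ξm = q • (ξm * x0))
    (hc3 : xp * ξm = ξm * xp)
    (hc4 : xm * ξ0 = q • (ξ0 * xm) + (q ^ 2 - 1) • (ξm * x0))
    (hc5 : x0 * ξ0 = q • (ξ0 * x0) - ((s - s⁻¹) * (q + 1)) • (ξm * xp))
    (hc6 : xp * ξ0 = q • (ξ0 * xp))
    (hc7 : xm * ξp = ξp * xm - ((s - s⁻¹) * (q + 1)) • (ξ0 * x0) + ((s - s⁻¹) ^ 2 * (q + 1)) • (ξm * xp))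
    (hc8 : x0 * ξp = q • (ξp * x0) + (q ^ 2 - 1) • (ξ0 * xp))
    (hc9 : xp * ξp = (q ^ 2) • (ξp * xp))
    (v ρ ρ' Λ Λ' : A)
    (hv1 : x0 * v = 1) (hv2 : v * x0 = 1)
    (hρxm : ρ * xm = xm * ρ) (hρx0 : ρ * x0 = x0 * ρ) (hρxp : ρ * xp = xp * ρ)
    (hρi1 : ρ * ρ' = 1) (hρi2 : ρ' * ρ = 1)
    (hΛi1 : Λ * Λ' = 1) (hΛi2 : Λ' * Λ = 1)
    (hΛxm : xm * Λ = q • (Λ * xm)) (hΛx0 : x0 * Λ = q • (Λ * x0)) (hΛxp : xp * Λ = q • (Λ * xp))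
    (θm θ0 θp : A)
    (hθm : θm = α⁻¹ • (Λ' * v * ξm))
    (hθ0 : θ0 = α⁻¹ • (Λ' * ρ' * ((s * (q + 1)) • (v * xp * ξm) + ξ0)))
    (hθp : θp = α⁻¹ • (Λ' * (ρ' * ρ') * ((-(s * q * (q + 1))) • (v * (xp * xp) * ξm) - (q + 1) • (xp * ξ0) + x0 * ξp))) :
    ∀ x ∈ ({xm, x0, xp} : Set A), ∀ t ∈ ({θm, θ0, θp} : Set A), x * t = t * x := by
  subst hθm hθ0 hθp
  have hX : IsQuantumEuclideanSpace q s xm x0 xp := ⟨hx1, hx2, hx3⟩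
  have hξ : IsCovariantCalculus q s xm x0 xp ξm ξ0 ξp :=
    ⟨hc1, hc2, hc3, hc4, hc5, hc6, hc7, hc8, hc9⟩
  intro x hx t ht
  have hω := coord_mul_frameNumerator hX hξ hsq hs hv1 hv2 x hx
  obtain ⟨hxΛ, hxρ⟩ : x * Λ = q • (Λ * x) ∧ Commute x ρ := by
    simp only [Set.mem_insert_iff, Set.mem_singleton_iff] at hx
    rcases hx with rfl | rfl | rfl
    exacts [⟨hΛxm, hρxm.symm⟩, ⟨hΛx0, hρx0.symm⟩, ⟨hΛxp, hρxp.symm⟩]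
  have hxρ' : Commute x ρ' := hxρ.units_inv_right (u := ⟨ρ, ρ', hρi1, hρi2⟩)
  simp only [Set.mem_insert_iff, Set.mem_singleton_iff] at ht
  rcases ht with rfl | rfl | rfl
  · simpa only [mul_one, mul_assoc] using (commute_smul_mul_mul hq hΛi1 hΛi2 hxΛ
      (Commute.one_right x) (hω _ (by simp)) α⁻¹).eq
  · exact commute_smul_mul_mul hq hΛi1 hΛi2 hxΛ hxρ' (hω _ (by simp)) α⁻¹
  · exact commute_smul_mul_mul hq hΛi1 hΛi2 hxΛ (hxρ'.mul_right hxρ')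
      (hω _ (by simp only [Set.mem_insert_iff, Set.mem_singleton_iff, or_true])) α⁻¹

theorem stmt9 {K A : Type*} [Field K] [CharZero K] [Ring A] [Algebra K A]
    (q s : K) (hq : q ≠ 0) (hs : s ≠ 0) (hsq : s ^ 2 = q)
    (xm x0 xp : A)
    (hx1 : xm * x0 = q • (x0 * xm))
    (hx2 : xp * x0 = q⁻¹ • (x0 * xp))
    (hx3 : xp * xm - xm * xp = (s - s⁻¹) • (x0 * x0))
    (hh : s - s⁻¹ ≠ 0)
    (α : K) (hα : α ≠ 0)
    (ξm ξ0 ξp : A)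
    (hc1 : xm * ξm = (q ^ 2) • (ξm * xm))
    (hc2 : x0 * ξm = q • (ξm * x0))
    (hc3 : xp * ξm = ξm * xp)
    (hc4 : xm * ξ0 = q • (ξ0 * xm) + (q ^ 2 - 1) • (ξm * x0))
    (hc5 : x0 * ξ0 = q • (ξ0 * x0) - ((s - s⁻¹) * (q + 1)) • (ξm * xp))
    (hc6 : xp * ξ0 = q • (ξ0 * xp))
    (hc7 : xm * ξp = ξp * xm - ((s - s⁻¹) * (q + 1)) • (ξ0 * x0) + ((s - s⁻¹) ^ 2 * (q + 1)) • (ξm * xp))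
    (hc8 : x0 * ξp = q • (ξp * x0) + (q ^ 2 - 1) • (ξ0 * xp))
    (hc9 : xp * ξp = (q ^ 2) • (ξp * xp))
    (v ρ ρ' Λ Λ' : A)
    (hv1 : x0 * v = 1) (hv2 : v * x0 = 1)
    (hρ2 : ρ * ρ = s⁻¹ • (xm * xp) + x0 * x0 + s • (xp * xm))
    (hρxm : ρ * xm = xm * ρ) (hρx0 : ρ * x0 = x0 * ρ) (hρxp : ρ * xp = xp * ρ)
    (hρi1 : ρ * ρ' = 1) (hρi2 : ρ' * ρ = 1)
    (hΛi1 : Λ * Λ' = 1) (hΛi2 : Λ' * Λ = 1)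
    (hΛxm : xm * Λ = q • (Λ * xm)) (hΛx0 : x0 * Λ = q • (Λ * x0)) (hΛxp : xp * Λ = q • (Λ * xp))
    (hρΛ : ρ * Λ = q • (Λ * ρ))
    (hξΛm : ξm * Λ = q • (Λ * ξm)) (hξΛ0 : ξ0 * Λ = q • (Λ * ξ0)) (hξΛp : ξp * Λ = q • (Λ * ξp))
    (hρξm : ρ * ξm = q • (ξm * ρ)) (hρξ0 : ρ * ξ0 = q • (ξ0 * ρ)) (hρξp : ρ * ξp = q • (ξp * ρ))
    (θm θ0 θp : A)
    (hθm : θm = α⁻¹ • (Λ' * v * ξm))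
    (hθ0 : θ0 = α⁻¹ • (Λ' * ρ' * ((s * (q + 1)) • (v * xp * ξm) + ξ0)))
    (hθp : θp = α⁻¹ • (Λ' * (ρ' * ρ') * ((-(s * q * (q + 1))) • (v * (xp * xp) * ξm) - (q + 1) • (xp * ξ0) + x0 * ξp))) :
    ∀ x ∈ ({xm, x0, xp} : Set A), ∀ t ∈ ({θm, θ0, θp} : Set A), x * t = t * x :=
  stmt9_general q s hq hs hsq xm x0 xp hx1 hx2 hx3 α ξm ξ0 ξp hc1 hc2 hc3 hc4 hc5 hc6 hc7 hc8 hc9 v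
    ρ ρ' Λ Λ' hv1 hv2 hρxm hρx0 hρxp hρi1 hρi2 hΛi1 hΛi2 hΛxm hΛx0 hΛxp θm θ0 θp hθm hθ0 hθp
end

section
/- The frame components satisfy the 'gθθ' relations g_{cd}θ^d_jθ^c_i = α⁻²r⁻²·g_{ij}: for all i, j ∈ {−,0,+}, s⁻¹·θ⁺_jθ⁻_i + θ⁰_jθ⁰_i + s·θ⁻_jθ⁺_i = α⁻²ρ'²·g_{ij}, where g_{−+} = s⁻¹, g_{00} = 1, g_{+−} = s and all other g_{ij} = 0. -/
/-!
Since ρ' commutes with x⁰, x⁺ and v = (x⁰)⁻¹, and x⁺v = q·vx⁺, each product θ^d_j θ^c_i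
normal-orders to a scalar multiple of ρ'², ρ'²vx⁺ or ρ'²v²(x⁺)², so every entry of the identity
reduces to an identity between rational functions of s (with q = s²).
-/

section FrameComponents

variable {K A : Type*} [Field K] [Ring A] [Algebra K A]

theorem Units.mul_inv_eq_smul_inv_mul (u : Aˣ) {x : A} {c : K} (h : ↑u * x = c • (x * ↑u)) :
    x * ↑u⁻¹ = c • (↑u⁻¹ * x) := by
  calc x * ↑u⁻¹ = ↑u⁻¹ * (↑u * x) * ↑u⁻¹ := by rw [← mul_assoc, u.inv_mul, one_mul]
    _ = c • (↑u⁻¹ * x * (↑u * ↑u⁻¹)) := by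
      rw [h, mul_smul_comm, smul_mul_assoc]; simp only [mul_assoc]
    _ = c • (↑u⁻¹ * x) := by rw [u.mul_inv, mul_one]

theorem left_comm_of_mul_eq_smul {a b : A} {c : K} (h : a * b = c • (b * a)) (t : A) :
    a * (b * t) = c • (b * (a * t)) := by
  rw [← mul_assoc, h, smul_mul_assoc, mul_assoc]

/-- The frame components `θ^c_i` (row `c`, column `i`, indices ordered `-, 0, +`), with `a = α⁻¹`,
`P = ρ'` and `q = s²`. -/
def frameComponents (a s : K) (P v x0 xp : A) : Fin 3 → Fin 3 → A :=
  ![![a • v, 0, 0],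
    ![(a * s * (s ^ 2 + 1)) • (P * v * xp), a • P, 0],
    ![(-(a * s * s ^ 2 * (s ^ 2 + 1))) • (P * P * v * (xp * xp)),
      (-(a * (s ^ 2 + 1))) • (P * P * xp), a • (P * P * x0)]]

def quantumMetric (s : K) : Fin 3 → Fin 3 → K :=
  ![![0, 0, s⁻¹], ![0, 1, 0], ![s, 0, 0]]

theorem frameComponents_metric {a s : K} {P v x0 xp : A} (hs : s ≠ 0)
    (hPv : Commute P v) (hPxp : Commute P xp) (hx0v : x0 * v = 1) (hvx0 : v * x0 = 1)
    (hxpv : xp * v = s ^ 2 • (v * xp)) (i j : Fin 3) :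
    let θ := frameComponents a s P v x0 xp
    s⁻¹ • (θ 2 j * θ 0 i) + θ 1 j * θ 1 i + s • (θ 0 j * θ 2 i)
      = (a * a * quantumMetric s i j) • (P * P) := by
  fin_cases i <;> fin_cases j <;>
    simp [frameComponents, quantumMetric, mul_assoc, hPxp.eq.symm, hPv.symm.left_comm,
      hPxp.symm.left_comm, hxpv, left_comm_of_mul_eq_smul hxpv, hx0v, hvx0] <;>
    match_scalars <;> field_simp <;> ring

end FrameComponents

theorem stmt10_general {K A : Type*} [Field K] [Ring A] [Algebra K A]
    (q s : K) (hs : s ≠ 0) (hsq : s ^ 2 = q)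
    (x0 xp : A)
    (hx2 : xp * x0 = q⁻¹ • (x0 * xp))
    (α : K)
    (v ρ ρ' : A)
    (hv1 : x0 * v = 1) (hv2 : v * x0 = 1)
    (hρx0 : ρ * x0 = x0 * ρ) (hρxp : ρ * xp = xp * ρ)
    (hρi1 : ρ * ρ' = 1) (hρi2 : ρ' * ρ = 1)
    (θf : Fin 3 → Fin 3 → A)
    (hθf : θf = ![![α⁻¹ • v, 0, 0],
                  ![(α⁻¹ * s * (q + 1)) • (ρ' * v * xp), α⁻¹ • ρ', 0],
                  ![(-(α⁻¹ * s * q * (q + 1))) • (ρ' * ρ' * v * (xp * xp)),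
                    (-(α⁻¹ * (q + 1))) • (ρ' * ρ' * xp), α⁻¹ • (ρ' * ρ' * x0)]])
    (gm : Fin 3 → Fin 3 → K)
    (hgm : gm = ![![0, 0, s⁻¹], ![0, 1, 0], ![s, 0, 0]]) :
    ∀ i j : Fin 3,
      s⁻¹ • (θf 2 j * θf 0 i) + θf 1 j * θf 1 i + s • (θf 0 j * θf 2 i)
        = (α⁻¹ * α⁻¹ * gm i j) • (ρ' * ρ') := by
  subst hsq hθf hgm
  let ρu : Aˣ := ⟨ρ, ρ', hρi1, hρi2⟩
  let x0u : Aˣ := ⟨x0, v, hv1, hv2⟩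
  have hρ'v : Commute ρ' v := (Commute.units_inv_right (u := x0u) hρx0).units_inv_left (u := ρu)
  have hρ'xp : Commute ρ' xp := Commute.units_inv_left (u := ρu) hρxp
  have hxpv : xp * v = s ^ 2 • (v * xp) := x0u.mul_inv_eq_smul_inv_mul <| by
    rw [hx2, smul_smul, mul_inv_cancel₀ (pow_ne_zero 2 hs), one_smul]
  exact frameComponents_metric hs hρ'v hρ'xp hv1 hv2 hxpv

theorem stmt10 {K A : Type*} [Field K] [CharZero K] [Ring A] [Algebra K A]
    (q s : K) (hq : q ≠ 0) (hs : s ≠ 0) (hsq : s ^ 2 = q)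
    (xm x0 xp : A)
    (hx1 : xm * x0 = q • (x0 * xm))
    (hx2 : xp * x0 = q⁻¹ • (x0 * xp))
    (hx3 : xp * xm - xm * xp = (s - s⁻¹) • (x0 * x0))
    (α : K) (hα : α ≠ 0)
    (v ρ ρ' : A)
    (hv1 : x0 * v = 1) (hv2 : v * x0 = 1)
    (hρ2 : ρ * ρ = s⁻¹ • (xm * xp) + x0 * x0 + s • (xp * xm))
    (hρxm : ρ * xm = xm * ρ) (hρx0 : ρ * x0 = x0 * ρ) (hρxp : ρ * xp = xp * ρ)
    (hρi1 : ρ * ρ' = 1) (hρi2 : ρ' * ρ = 1)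
    (θf : Fin 3 → Fin 3 → A)
    (hθf : θf = ![![α⁻¹ • v, 0, 0],
                  ![(α⁻¹ * s * (q + 1)) • (ρ' * v * xp), α⁻¹ • ρ', 0],
                  ![(-(α⁻¹ * s * q * (q + 1))) • (ρ' * ρ' * v * (xp * xp)),
                    (-(α⁻¹ * (q + 1))) • (ρ' * ρ' * xp), α⁻¹ • (ρ' * ρ' * x0)]])
    (gm : Fin 3 → Fin 3 → K)
    (hgm : gm = ![![0, 0, s⁻¹], ![0, 1, 0], ![s, 0, 0]]) :
    ∀ i j : Fin 3,
      s⁻¹ • (θf 2 j * θf 0 i) + θf 1 j * θf 1 i + s • (θf 0 j * θf 2 i)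
        = (α⁻¹ * α⁻¹ * gm i j) • (ρ' * ρ') :=
  stmt10_general q s hs hsq x0 xp hx2 α v ρ ρ' hv1 hv2 hρx0 hρxp hρi1 hρi2 θf hθf gm hgm
end

section
/- The frame components satisfy the contravariant 'gθθ' relations g^{ij}θ^b_jθ^a_i = α⁻²r⁻²·g^{ab}: for all a, b ∈ {−,0,+}, s⁻¹·θ^b₊θ^a₋ + θ^b₀θ^a₀ + s·θ^b₋θ^a₊ = α⁻²ρ'²·g^{ab}, where g^{−+} = s⁻¹, g^{00} = 1, g^{+−} = s and all other g^{ab} = 0. -/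
theorem stmt11 {K A : Type*} [Field K] [CharZero K] [Ring A] [Algebra K A]
    (q s : K) (hq : q ≠ 0) (hs : s ≠ 0) (hsq : s ^ 2 = q)
    (xm x0 xp : A)
    (hx1 : xm * x0 = q • (x0 * xm))
    (hx2 : xp * x0 = q⁻¹ • (x0 * xp))
    (hx3 : xp * xm - xm * xp = (s - s⁻¹) • (x0 * x0))
    (α : K) (hα : α ≠ 0)
    (v ρ ρ' : A)
    (hv1 : x0 * v = 1) (hv2 : v * x0 = 1)
    (hρ2 : ρ * ρ = s⁻¹ • (xm * xp) + x0 * x0 + s • (xp * xm))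
    (hρxm : ρ * xm = xm * ρ) (hρx0 : ρ * x0 = x0 * ρ) (hρxp : ρ * xp = xp * ρ)
    (hρi1 : ρ * ρ' = 1) (hρi2 : ρ' * ρ = 1)
    (θf : Fin 3 → Fin 3 → A)
    (hθf : θf = ![![α⁻¹ • v, 0, 0],
                  ![(α⁻¹ * s * (q + 1)) • (ρ' * v * xp), α⁻¹ • ρ', 0],
                  ![(-(α⁻¹ * s * q * (q + 1))) • (ρ' * ρ' * v * (xp * xp)),
                    (-(α⁻¹ * (q + 1))) • (ρ' * ρ' * xp), α⁻¹ • (ρ' * ρ' * x0)]])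
    (gm : Fin 3 → Fin 3 → K)
    (hgm : gm = ![![0, 0, s⁻¹], ![0, 1, 0], ![s, 0, 0]]) :
    ∀ a b : Fin 3,
      s⁻¹ • (θf b 2 * θf a 0) + θf b 1 * θf a 1 + s • (θf b 0 * θf a 2)
        = (α⁻¹ * α⁻¹ * gm a b) • (ρ' * ρ') := by
  have hv1' : ∀ y : A, x0 * (v * y) = y := fun y => by rw [← mul_assoc, hv1, one_mul]
  have hv2' : ∀ y : A, v * (x0 * y) = y := fun y => by rw [← mul_assoc, hv2, one_mul]
  have hρ1' : ∀ y : A, ρ * (ρ' * y) = y := fun y => by rw [← mul_assoc, hρi1, one_mul]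
  have hρ2' : ∀ y : A, ρ' * (ρ * y) = y := fun y => by rw [← mul_assoc, hρi2, one_mul]
  -- ρ commutes with v
  have hρv : ρ * v = v * ρ := by
    have h := congrArg (fun y => v * (y * v)) hρx0
    simpa [mul_assoc, hv1, hv2', mul_one] using h.symm
  -- ρ' commutes with xp, x0, v
  have hcomm : ∀ z : A, ρ * z = z * ρ → z * ρ' = ρ' * z := by
    intro z hz
    have h := congrArg (fun y => ρ' * (y * ρ')) hz
    simpa [mul_assoc, hρi1, hρ2', mul_one] using h
  have hρ'xp : xp * ρ' = ρ' * xp := hcomm xp hρxp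
  have hρ'x0 : x0 * ρ' = ρ' * x0 := hcomm x0 hρx0
  have hρ'v : v * ρ' = ρ' * v := hcomm v hρv
  have hρ'xp' : ∀ y : A, xp * (ρ' * y) = ρ' * (xp * y) := fun y => by
    rw [← mul_assoc, hρ'xp, mul_assoc]
  have hρ'x0' : ∀ y : A, x0 * (ρ' * y) = ρ' * (x0 * y) := fun y => by
    rw [← mul_assoc, hρ'x0, mul_assoc]
  have hρ'v' : ∀ y : A, v * (ρ' * y) = ρ' * (v * y) := fun y => by
    rw [← mul_assoc, hρ'v, mul_assoc]
  -- move x0 left past xp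
  have hx2' : ∀ y : A, xp * (x0 * y) = q⁻¹ • (x0 * (xp * y)) := fun y => by
    rw [← mul_assoc, hx2, smul_mul_assoc, mul_assoc]
  intro a b
  subst hsq hθf hgm
  fin_cases a <;> fin_cases b <;>
    simp only [Fin.zero_eta, Fin.mk_one, Fin.reduceFinMk, Matrix.cons_val_zero,
      Matrix.cons_val_one, Matrix.head_cons, Matrix.cons_val_two, Matrix.tail_cons,
      Matrix.head_fin_const, Fin.isValue] <;>
    simp only [smul_mul_assoc, mul_smul_comm, mul_assoc, smul_smul, mul_zero, zero_mul,
      smul_zero, zero_smul, add_zero, zero_add, mul_one, one_mul,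
      hρ'xp, hρ'x0, hρ'v, hρ'xp', hρ'x0', hρ'v', hx2, hx2', hv1, hv2, hv1', hv2',
      hρi1, hρi2, hρ1', hρ2'] <;>
    match_scalars <;> field_simp <;> ring
end

section
/- The matrix e_a^i satisfies the 'gTT' relations: for all i, j ∈ {−,0,+}, s⁻¹·e^i₋e^j₊ + e^i₀e^j₀ + s·e^i₊e^j₋ = ρ²α²·g^{ij}, and for all a, b ∈ {−,0,+}, s⁻¹·(e⁻_a e⁺_b) + e⁰_a e⁰_b + s·(e⁺_a e⁻_b) summed with the metric, i.e. g_{ij}e^i_ae^j_b = ρ²α²·g_{ab}, where g_{−+} = g^{−+} = s⁻¹, g_{00} = g^{00} = 1, g_{+−} = g^{+−} = s and all other entries vanish. Thus (αρ)⁻¹e^i_a fulfills the gTT-relations of the quantum group SO_q(3). -/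
theorem stmt13 {K A : Type*} [Field K] [CharZero K] [Ring A] [Algebra K A]
    (q s : K) (hq : q ≠ 0) (hs : s ≠ 0) (hsq : s ^ 2 = q)
    (xm x0 xp : A)
    (hx1 : xm * x0 = q • (x0 * xm))
    (hx2 : xp * x0 = q⁻¹ • (x0 * xp))
    (hx3 : xp * xm - xm * xp = (s - s⁻¹) • (x0 * x0))
    (α : K) (hα : α ≠ 0)
    (v ρ : A)
    (hv1 : x0 * v = 1) (hv2 : v * x0 = 1)
    (hρ2 : ρ * ρ = s⁻¹ • (xm * xp) + x0 * x0 + s • (xp * xm))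
    (hρxm : ρ * xm = xm * ρ) (hρx0 : ρ * x0 = x0 * ρ) (hρxp : ρ * xp = xp * ρ)
    (e : Fin 3 → Fin 3 → A)
    (he : e = ![![α • x0, 0, 0],
                ![(-(α * (s + s⁻¹))) • xp, α • ρ, 0],
                ![(-(α * s * (q + 1))) • (v * (xp * xp)), (α * (q + 1)) • (ρ * v * xp), α • (ρ * ρ * v)]])
    (gm : Fin 3 → Fin 3 → K)
    (hgm : gm = ![![0, 0, s⁻¹], ![0, 1, 0], ![s, 0, 0]]) :
    (∀ i j : Fin 3,
      s⁻¹ • (e 0 i * e 2 j) + e 1 i * e 1 j + s • (e 2 i * e 0 j)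
        = (α * α * gm i j) • (ρ * ρ)) ∧
    (∀ a b : Fin 3,
      s⁻¹ • (e a 0 * e b 2) + e a 1 * e b 1 + s • (e a 2 * e b 0)
        = (α * α * gm a b) • (ρ * ρ)) := by
  subst hsq
  subst he
  subst hgm
  have hs2 : (s ^ 2 : K) ≠ 0 := pow_ne_zero 2 hs
  -- x0 * xp = s^2 • (xp * x0)
  have hx0xp : x0 * xp = (s ^ 2) • (xp * x0) := by
    rw [hx2, smul_smul, mul_inv_cancel₀ hs2, one_smul]
  -- xp * v = s^2 • (v * xp)
  have hxpv : xp * v = (s ^ 2) • (v * xp) := by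
    calc xp * v = (v * x0) * (xp * v) := by rw [hv2, one_mul]
      _ = v * (x0 * xp) * v := by rw [mul_assoc, ← mul_assoc x0 xp v, ← mul_assoc]
      _ = v * ((s ^ 2) • (xp * x0)) * v := by rw [hx0xp]
      _ = (s ^ 2) • (v * xp * (x0 * v)) := by
            rw [mul_smul_comm, smul_mul_assoc, mul_assoc, mul_assoc, mul_assoc]
      _ = (s ^ 2) • (v * xp) := by rw [hv1, mul_one]
  -- ρ * v = v * ρ
  have hρv : ρ * v = v * ρ := by
    calc ρ * v = (v * x0) * (ρ * v) := by rw [hv2, one_mul]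
      _ = v * (x0 * ρ) * v := by rw [mul_assoc, ← mul_assoc x0 ρ v, ← mul_assoc]
      _ = v * ρ * (x0 * v) := by rw [← hρx0, mul_assoc, mul_assoc, mul_assoc]
      _ = v * ρ := by rw [hv1, mul_one]
  -- permutation rules (right-assoc normal form, order: ρ, v/x0, xp)
  have Pρxp : ∀ c : A, xp * (ρ * c) = ρ * (xp * c) := fun c => by
    rw [← mul_assoc, ← hρxp, mul_assoc]
  have Pρv : ∀ c : A, v * (ρ * c) = ρ * (v * c) := fun c => by
    rw [← mul_assoc, ← hρv, mul_assoc]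
  have Pρx0 : ∀ c : A, x0 * (ρ * c) = ρ * (x0 * c) := fun c => by
    rw [← mul_assoc, ← hρx0, mul_assoc]
  have Pvxp : ∀ c : A, xp * (v * c) = (s ^ 2) • (v * (xp * c)) := fun c => by
    rw [← mul_assoc, hxpv, smul_mul_assoc, mul_assoc]
  have Px0xp : ∀ c : A, xp * (x0 * c) = (s ^ 2)⁻¹ • (x0 * (xp * c)) := fun c => by
    rw [← mul_assoc, hx2, smul_mul_assoc, mul_assoc]
  have Cx0v : ∀ c : A, x0 * (v * c) = c := fun c => by rw [← mul_assoc, hv1, one_mul]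
  have Cvx0 : ∀ c : A, v * (x0 * c) = c := fun c => by rw [← mul_assoc, hv2, one_mul]
  have bxpρ : xp * ρ = ρ * xp := (hρxp).symm
  have bvρ : v * ρ = ρ * v := (hρv).symm
  have bx0ρ : x0 * ρ = ρ * x0 := (hρx0).symm
  constructor
  · intro i j
    fin_cases i <;> fin_cases j <;>
      simp only [Fin.reduceFinMk, Fin.mk_zero, Fin.mk_one, Fin.isValue, Matrix.cons_val_zero,
        Matrix.cons_val_one, Matrix.head_cons, Matrix.cons_val_two, Matrix.tail_cons] <;>
      simp only [smul_mul_assoc, mul_smul_comm, smul_smul, mul_assoc,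
        Pρxp, Pρv, Pρx0, Pvxp, Px0xp, Cx0v, Cvx0, bxpρ, bvρ, bx0ρ, hx2, hxpv, hv1, hv2,
        zero_mul, mul_zero, smul_zero, add_zero, zero_add, mul_one, one_mul] <;>
      match_scalars <;> field_simp <;> ring
  · intro a b
    fin_cases a <;> fin_cases b <;>
      simp only [Fin.reduceFinMk, Fin.mk_zero, Fin.mk_one, Fin.isValue, Matrix.cons_val_zero,
        Matrix.cons_val_one, Matrix.head_cons, Matrix.cons_val_two, Matrix.tail_cons] <;>
      simp only [smul_mul_assoc, mul_smul_comm, smul_smul, mul_assoc,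
        Pρxp, Pρv, Pρx0, Pvxp, Px0xp, Cx0v, Cvx0, bxpρ, bvρ, bx0ρ, hx2, hxpv, hv1, hv2,
        zero_mul, mul_zero, smul_zero, add_zero, zero_add, mul_one, one_mul] <;>
      match_scalars <;> field_simp <;> ring
end

section
/- The elements λ₋, λ₀, λ₊ satisfy the same commutation relations as the coordinates x⁻, x⁰, x⁺ of the quantum Euclidean space: λ₋λ₀ = q·λ₀λ₋, λ₊λ₀ = q⁻¹·λ₀λ₊, and λ₊λ₋ − λ₋λ₊ = h·(λ₀)². -/
theorem qswap' {K A : Type*} [Field K] [Ring A] [Algebra K A] {k : K} {a b : A}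
    (h : a * b = k • (b * a)) (c : A) : a * (b * c) = k • (b * (a * c)) := by
  rw [← mul_assoc, h, smul_mul_assoc, mul_assoc]

theorem cswap' {A : Type*} [Ring A] {a b : A} (h : a * b = b * a) (c : A) :
    a * (b * c) = b * (a * c) := by rw [← mul_assoc, h, mul_assoc]

theorem qswap_inv' {K A : Type*} [Field K] [Ring A] [Algebra K A] {k : K} (hk : k ≠ 0)
    {a b : A} (h : a * b = k • (b * a)) : b * a = k⁻¹ • (a * b) := by
  rw [h, smul_smul, inv_mul_cancel₀ hk, one_smul]

theorem vconj' {K A : Type*} [Field K] [Ring A] [Algebra K A] {k : K} {x0 v a : A}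
    (hv1 : x0 * v = 1) (hv2 : v * x0 = 1) (h : a * x0 = k • (x0 * a)) :
    v * a = k • (a * v) := by
  calc v * a = v * (a * x0) * v := by rw [mul_assoc v, mul_assoc a, hv1, mul_one]
  _ = v * (k • (x0 * a)) * v := by rw [h]
  _ = k • (a * v) := by rw [mul_smul_comm, smul_mul_assoc, ← mul_assoc v, hv2, one_mul]

theorem stmt15 {K A : Type*} [Field K] [CharZero K] [Ring A] [Algebra K A]
    (q s : K) (hq : q ≠ 0) (hs : s ≠ 0) (hsq : s ^ 2 = q)
    (xm x0 xp : A)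
    (hx1 : xm * x0 = q • (x0 * xm))
    (hx2 : xp * x0 = q⁻¹ • (x0 * xp))
    (hx3 : xp * xm - xm * xp = (s - s⁻¹) • (x0 * x0))
    (hh : s - s⁻¹ ≠ 0)
    (α : K) (hα : α ≠ 0)
    (v ρ Λ : A)
    (hv1 : x0 * v = 1) (hv2 : v * x0 = 1)
    (hρ2 : ρ * ρ = s⁻¹ • (xm * xp) + x0 * x0 + s • (xp * xm))
    (hρxm : ρ * xm = xm * ρ) (hρx0 : ρ * x0 = x0 * ρ) (hρxp : ρ * xp = xp * ρ)
    (hΛxm : xm * Λ = q • (Λ * xm)) (hΛx0 : x0 * Λ = q • (Λ * x0)) (hΛxp : xp * Λ = q • (Λ * xp))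
    (hρΛ : ρ * Λ = q • (Λ * ρ))
    (lm l0 lp : A)
    (hlm : lm = ((s - s⁻¹)⁻¹ * q * α) • (Λ * v * xp))
    (hl0 : l0 = (-((s - s⁻¹)⁻¹ * s * α)) • (Λ * v * ρ))
    (hlp : lp = (-((s - s⁻¹)⁻¹ * α)) • (Λ * v * xm)) :
    lm * l0 = q • (l0 * lm) ∧
    lp * l0 = q⁻¹ • (l0 * lp) ∧
    lp * lm - lm * lp = (s - s⁻¹) • (l0 * l0) := by
  subst hsq
  have hs1 : s ^ 2 - 1 ≠ 0 := by
    have : s * (s - s⁻¹) = s ^ 2 - 1 := by field_simp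
    rw [← this]; exact mul_ne_zero hs hh
  have hsub : s - s⁻¹ = (s ^ 2 - 1) * s⁻¹ := by field_simp
  have hinv : (s - s⁻¹)⁻¹ = s * (s ^ 2 - 1)⁻¹ := by
    rw [hsub, mul_inv, inv_inv, mul_comm]
  have hΛx0' : Λ * x0 = (s^2)⁻¹ • (x0 * Λ) := qswap_inv' hq hΛx0
  have hvΛ : v * Λ = (s^2)⁻¹ • (Λ * v) := vconj' hv1 hv2 hΛx0'
  have hvxm : v * xm = (s^2) • (xm * v) := vconj' hv1 hv2 hx1
  have hvxp : v * xp = (s^2)⁻¹ • (xp * v) := vconj' hv1 hv2 hx2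
  have hρx0' : ρ * x0 = (1 : K) • (x0 * ρ) := by rw [one_smul]; exact hρx0
  have hvρ : v * ρ = ρ * v := by
    have := vconj' hv1 hv2 hρx0'; rwa [one_smul] at this
  have hxpv : xp * v = (s^2) • (v * xp) := by
    have := qswap_inv' (inv_ne_zero hq) hvxp; rwa [inv_inv] at this
  have hxmv : xm * v = (s^2)⁻¹ • (v * xm) := qswap_inv' hq hvxm
  have hρv : ρ * v = v * ρ := hvρ.symm
  have hx0sq : x0 * x0 = (s - s⁻¹)⁻¹ • (xp * xm - xm * xp) := by
    rw [hx3, smul_smul, inv_mul_cancel₀ hh, one_smul]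
  refine ⟨?_, ?_, ?_⟩
  · rw [hlm, hl0]
    simp only [smul_mul_assoc, mul_smul_comm, mul_assoc, smul_smul,
      qswap' hΛxp, qswap' hρΛ, qswap' hvΛ, qswap' hxpv, cswap' hρv, hρxp]
    congr 1
    field_simp
  · rw [hlp, hl0]
    simp only [smul_mul_assoc, mul_smul_comm, mul_assoc, smul_smul,
      qswap' hΛxm, qswap' hρΛ, qswap' hvΛ, qswap' hxmv, cswap' hρv, hρxm]
    congr 1
    field_simp
  · rw [hlp, hlm, hl0]
    simp only [smul_mul_assoc, mul_smul_comm, mul_assoc, smul_smul,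
      qswap' hΛxm, qswap' hΛxp, qswap' hρΛ, qswap' hvΛ, qswap' hxmv, qswap' hxpv,
      cswap' hρv]
    rw [hρ2, hx0sq]
    simp only [mul_add, mul_sub, smul_add, smul_sub, mul_smul_comm, smul_smul]
    have h1 : (s - s⁻¹) * (s - s⁻¹)⁻¹ = 1 := mul_inv_cancel₀ hh
    have h2 : s * s⁻¹ = 1 := mul_inv_cancel₀ hs
    have h3 : s ^ 2 * (s ^ 2)⁻¹ = 1 := mul_inv_cancel₀ hq
    match_scalars
    · linear_combination ((s - s⁻¹)⁻¹ ^ 2 * α ^ 2 * s ^ 4 * (s ^ 2)⁻¹) * h1 +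
        ((s - s⁻¹)⁻¹ ^ 2 * α ^ 2 * s ^ 2 * (s ^ 2)⁻¹ * (1 + s * s⁻¹ - s ^ 2)) * h2 +
        (-((s - s⁻¹)⁻¹ ^ 2 * α ^ 2 * s ^ 2 * (s ^ 2)⁻¹)) * h3
    · linear_combination (-((s - s⁻¹)⁻¹ ^ 2 * α ^ 2 * s ^ 4 * (s ^ 2)⁻¹)) * h1 +
        ((s - s⁻¹)⁻¹ ^ 2 * α ^ 2 * s ^ 4 * (s ^ 2)⁻¹) * h2
end

section
/- The quadratic invariant of the λ's is a multiple of Λ²: s⁻¹·λ₋λ₊ + (λ₀)² + s·λ₊λ₋ = q·h⁻²·α²·Λ², i.e. g^{ab}λ_aλ_b = qh⁻²(Λα)². -/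
theorem stmt16 {K A : Type*} [Field K] [CharZero K] [Ring A] [Algebra K A]
    (q s : K) (hq : q ≠ 0) (hs : s ≠ 0) (hsq : s ^ 2 = q)
    (xm x0 xp : A)
    (hx1 : xm * x0 = q • (x0 * xm))
    (hx2 : xp * x0 = q⁻¹ • (x0 * xp))
    (hx3 : xp * xm - xm * xp = (s - s⁻¹) • (x0 * x0))
    (hh : s - s⁻¹ ≠ 0)
    (α : K) (hα : α ≠ 0)
    (v ρ Λ : A)
    (hv1 : x0 * v = 1) (hv2 : v * x0 = 1)
    (hρ2 : ρ * ρ = s⁻¹ • (xm * xp) + x0 * x0 + s • (xp * xm))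
    (hρxm : ρ * xm = xm * ρ) (hρx0 : ρ * x0 = x0 * ρ) (hρxp : ρ * xp = xp * ρ)
    (hΛxm : xm * Λ = q • (Λ * xm)) (hΛx0 : x0 * Λ = q • (Λ * x0)) (hΛxp : xp * Λ = q • (Λ * xp))
    (hρΛ : ρ * Λ = q • (Λ * ρ))
    (lm l0 lp : A)
    (hlm : lm = ((s - s⁻¹)⁻¹ * q * α) • (Λ * v * xp))
    (hl0 : l0 = (-((s - s⁻¹)⁻¹ * s * α)) • (Λ * v * ρ))
    (hlp : lp = (-((s - s⁻¹)⁻¹ * α)) • (Λ * v * xm)) :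
    s⁻¹ • (lm * lp) + l0 * l0 + s • (lp * lm)
      = (q * ((s - s⁻¹)⁻¹) ^ 2 * α ^ 2) • (Λ * Λ) := by
  -- basic commutation lemmas with v
  have hxpv : xp * v = q • (v * xp) := by
    have h1 : v * xp = q⁻¹ • (xp * v) := by
      calc v * xp = v * xp * (x0 * v) := by rw [hv1, mul_one]
        _ = v * (xp * x0) * v := by simp [mul_assoc]
        _ = v * (q⁻¹ • (x0 * xp)) * v := by rw [hx2]
        _ = q⁻¹ • (v * x0 * (xp * v)) := by
            simp [mul_smul_comm, smul_mul_assoc, mul_assoc]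
        _ = q⁻¹ • (xp * v) := by rw [hv2, one_mul]
    rw [h1, smul_smul, mul_inv_cancel₀ hq, one_smul]
  have hxmv : xm * v = q⁻¹ • (v * xm) := by
    have h1 : v * xm = q • (xm * v) := by
      calc v * xm = v * xm * (x0 * v) := by rw [hv1, mul_one]
        _ = v * (xm * x0) * v := by simp [mul_assoc]
        _ = v * (q • (x0 * xm)) * v := by rw [hx1]
        _ = q • (v * x0 * (xm * v)) := by
            simp [mul_smul_comm, smul_mul_assoc, mul_assoc]
        _ = q • (xm * v) := by rw [hv2, one_mul]
    rw [h1, smul_smul, inv_mul_cancel₀ hq, one_smul]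
  have hρv : ρ * v = (1 : K) • (v * ρ) := by
    rw [one_smul]
    calc ρ * v = (v * x0) * ρ * v := by rw [hv2, one_mul]
      _ = v * (x0 * ρ) * v := by simp [mul_assoc]
      _ = v * (ρ * x0) * v := by rw [hρx0]
      _ = v * ρ * (x0 * v) := by simp [mul_assoc]
      _ = v * ρ := by rw [hv1, mul_one]
  have hvΛ : v * Λ = q⁻¹ • (Λ * v) := by
    have h1 : Λ * v = q • (v * Λ) := by
      calc Λ * v = (v * x0) * Λ * v := by rw [hv2, one_mul]
        _ = v * (x0 * Λ) * v := by simp [mul_assoc]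
        _ = v * (q • (Λ * x0)) * v := by rw [hΛx0]
        _ = q • (v * Λ * (x0 * v)) := by
            simp [mul_smul_comm, smul_mul_assoc, mul_assoc]
        _ = q • (v * Λ) := by rw [hv1, mul_one]
    rw [h1, smul_smul, inv_mul_cancel₀ hq, one_smul]
  -- general product normalization
  have gen : ∀ (a b : A) (c : K), a * Λ = q • (Λ * a) → a * v = c • (v * a) →
      (Λ * v * a) * (Λ * v * b) = c • (Λ * (Λ * (v * (v * (a * b))))) := by
    intro a b c ha hav
    calc (Λ * v * a) * (Λ * v * b)
        = Λ * (v * (a * (Λ * (v * b)))) := by simp [mul_assoc]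
      _ = Λ * (v * (q • (Λ * (a * (v * b))))) := by
          rw [← mul_assoc a Λ, ha, smul_mul_assoc, mul_assoc]
      _ = q • (Λ * (v * (Λ * (a * (v * b))))) := by
          simp [mul_smul_comm]
      _ = q • (Λ * (q⁻¹ • (Λ * (v * (a * (v * b)))))) := by
          rw [← mul_assoc v Λ, hvΛ, smul_mul_assoc, mul_assoc]
      _ = Λ * (Λ * (v * (a * (v * b)))) := by
          rw [mul_smul_comm, smul_smul, mul_inv_cancel₀ hq, one_smul]
      _ = Λ * (Λ * (v * (c • (v * (a * b))))) := by
          rw [← mul_assoc a v, hav, smul_mul_assoc, mul_assoc]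
      _ = c • (Λ * (Λ * (v * (v * (a * b))))) := by
          simp [mul_smul_comm]
  have gA := gen xp xm q hΛxp hxpv
  have gB := gen ρ ρ 1 hρΛ hρv
  have gC := gen xm xp q⁻¹ hΛxm hxmv
  have hone : v * (v * (x0 * x0)) = 1 := by
    rw [← mul_assoc v x0, hv2, one_mul, hv2]
  subst hlm hl0 hlp
  rw [smul_mul_smul_comm, smul_mul_smul_comm, smul_mul_smul_comm, gA, gB, gC, hρ2]
  simp only [mul_add, mul_smul_comm, smul_smul, smul_add, one_smul]
  rw [hone, mul_one]
  have hs2 : s ^ 2 - 1 ≠ 0 := by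
    intro h
    apply hh
    have : s - s⁻¹ = (s ^ 2 - 1) * s⁻¹ := by field_simp
    rw [this, h, zero_mul]
  have key : (s - s⁻¹)⁻¹ = s * (s ^ 2 - 1)⁻¹ := by
    rw [show s - s⁻¹ = (s ^ 2 - 1) * s⁻¹ from by field_simp]
    field_simp
  rw [← hsq] at *
  match_scalars <;> simp only [key] <;> field_simp <;> ring
end

section
/- The Dirac operator decomposes along the frame: −(λ₋θ⁻ + λ₀θ⁰ + λ₊θ⁺) = (q−1)⁻¹q²·ρ'²·η, i.e. θ = −λ_aθ^a where θ = (q−1)⁻¹q²r⁻²η is the Dirac operator of the differential calculus. -/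
-- from x*u = c•(u*x) get u'*x = c•(x*u')
theorem conjR {K A : Type*} [CommSemiring K] [Ring A] [Algebra K A] {u u' x : A} {c : K}
    (h1 : u * u' = 1) (h2 : u' * u = 1) (h : x * u = c • (u * x)) :
    u' * x = c • (x * u') := by
  have inj : ∀ a b : A, u * a = u * b → a = b := fun a b hab => by
    have := congrArg (u' * ·) hab
    simpa [← mul_assoc, h2] using this
  apply inj
  rw [mul_smul_comm, ← mul_assoc, h1, one_mul, ← mul_assoc u x u',
    ← smul_mul_assoc c (u*x) u', ← h, mul_assoc, h1, mul_one]

-- push a relation under a tail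
theorem swap_tail {K A : Type*} [CommSemiring K] [Ring A] [Algebra K A] {a b c : A} {r : K}
    (h : a * b = r • c) (y : A) : a * (b * y) = r • (c * y) := by
  rw [← mul_assoc, h, smul_mul_assoc]

set_option maxHeartbeats 1600000 in
theorem stmt17 {K A : Type*} [Field K] [CharZero K] [Ring A] [Algebra K A]
    (q s : K) (hq : q ≠ 0) (hs : s ≠ 0) (hsq : s ^ 2 = q)
    (xm x0 xp : A)
    (hx1 : xm * x0 = q • (x0 * xm))
    (hx2 : xp * x0 = q⁻¹ • (x0 * xp))
    (hx3 : xp * xm - xm * xp = (s - s⁻¹) • (x0 * x0))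
    (hh : s - s⁻¹ ≠ 0)
    (α : K) (hα : α ≠ 0)
    (ξm ξ0 ξp : A)
    (hc1 : xm * ξm = (q ^ 2) • (ξm * xm))
    (hc2 : x0 * ξm = q • (ξm * x0))
    (hc3 : xp * ξm = ξm * xp)
    (hc4 : xm * ξ0 = q • (ξ0 * xm) + (q ^ 2 - 1) • (ξm * x0))
    (hc5 : x0 * ξ0 = q • (ξ0 * x0) - ((s - s⁻¹) * (q + 1)) • (ξm * xp))
    (hc6 : xp * ξ0 = q • (ξ0 * xp))
    (hc7 : xm * ξp = ξp * xm - ((s - s⁻¹) * (q + 1)) • (ξ0 * x0) + ((s - s⁻¹) ^ 2 * (q + 1)) • (ξm * xp))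
    (hc8 : x0 * ξp = q • (ξp * x0) + (q ^ 2 - 1) • (ξ0 * xp))
    (hc9 : xp * ξp = (q ^ 2) • (ξp * xp))
    (v ρ ρ' Λ Λ' : A)
    (hv1 : x0 * v = 1) (hv2 : v * x0 = 1)
    (hρ2 : ρ * ρ = s⁻¹ • (xm * xp) + x0 * x0 + s • (xp * xm))
    (hρxm : ρ * xm = xm * ρ) (hρx0 : ρ * x0 = x0 * ρ) (hρxp : ρ * xp = xp * ρ)
    (hρi1 : ρ * ρ' = 1) (hρi2 : ρ' * ρ = 1)
    (hΛi1 : Λ * Λ' = 1) (hΛi2 : Λ' * Λ = 1)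
    (hΛxm : xm * Λ = q • (Λ * xm)) (hΛx0 : x0 * Λ = q • (Λ * x0)) (hΛxp : xp * Λ = q • (Λ * xp))
    (hρΛ : ρ * Λ = q • (Λ * ρ))
    (hξΛm : ξm * Λ = q • (Λ * ξm)) (hξΛ0 : ξ0 * Λ = q • (Λ * ξ0)) (hξΛp : ξp * Λ = q • (Λ * ξp))
    (hρξm : ρ * ξm = q • (ξm * ρ)) (hρξ0 : ρ * ξ0 = q • (ξ0 * ρ)) (hρξp : ρ * ξp = q • (ξp * ρ))
    (θm θ0 θp : A)
    (hθm : θm = α⁻¹ • (Λ' * v * ξm))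
    (hθ0 : θ0 = α⁻¹ • (Λ' * ρ' * ((s * (q + 1)) • (v * xp * ξm) + ξ0)))
    (hθp : θp = α⁻¹ • (Λ' * (ρ' * ρ') * ((-(s * q * (q + 1))) • (v * (xp * xp) * ξm) - (q + 1) • (xp * ξ0) + x0 * ξp)))
    (lm l0 lp : A)
    (hlm : lm = ((s - s⁻¹)⁻¹ * q * α) • (Λ * v * xp))
    (hl0 : l0 = (-((s - s⁻¹)⁻¹ * s * α)) • (Λ * v * ρ))
    (hlp : lp = (-((s - s⁻¹)⁻¹ * α)) • (Λ * v * xm))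
    (η : A) (hη : η = s⁻¹ • (xm * ξp) + x0 * ξ0 + s • (xp * ξm)) :
    -(lm * θm + l0 * θ0 + lp * θp) = ((q - 1)⁻¹ * q ^ 2) • (ρ' * ρ' * η) := by
  subst hsq
  -- scalar nonzero facts
  have hs2 : (s:K)^2 ≠ 0 := pow_ne_zero _ hs
  have h21 : s^2 - 1 ≠ 0 := fun h0 => hh (by field_simp; linear_combination h0)
  have hD : s*s - 1 ≠ 0 := fun h0 => h21 (by linear_combination h0)
  have hE : α*(s*s - 1) ≠ 0 := mul_ne_zero hα hD
  have hG : (-1:K) + s^2 ≠ 0 := fun h0 => h21 (by linear_combination h0)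
  have hH : -s + s^3 ≠ 0 := fun h0 => (mul_ne_zero hs h21) (by linear_combination h0)
  have hI : s^3 - s ≠ 0 := fun h0 => (mul_ne_zero hs h21) (by linear_combination h0)
  have flip : ∀ {c : K}, c ≠ 0 → ∀ {a b : A}, a = c • b → b = c⁻¹ • a := by
    intro c hc a b hab
    rw [hab, smul_smul, inv_mul_cancel₀ hc, one_smul]
  -- base commutations with v
  have cvxm : v * xm = (s^2) • (xm * v) := conjR hv1 hv2 hx1
  have cvxp : v * xp = (s^2)⁻¹ • (xp * v) := conjR hv1 hv2 hx2
  have cxmv : xm * v = (s^2)⁻¹ • (v * xm) := flip hs2 cvxm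
  have cxpv : xp * v = (s^2) • (v * xp) := by
    have := flip (inv_ne_zero hs2) cvxp; rwa [inv_inv] at this
  -- base commutations with Λ'
  have cΛxm : Λ' * xm = (s^2) • (xm * Λ') := conjR hΛi1 hΛi2 hΛxm
  have cxmΛ : xm * Λ' = (s^2)⁻¹ • (Λ' * xm) := flip hs2 cΛxm
  have cΛxp : Λ' * xp = (s^2) • (xp * Λ') := conjR hΛi1 hΛi2 hΛxp
  have cxpΛ : xp * Λ' = (s^2)⁻¹ • (Λ' * xp) := flip hs2 cΛxp
  have cΛx0 : Λ' * x0 = (s^2) • (x0 * Λ') := conjR hΛi1 hΛi2 hΛx0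
  have cΛρ : Λ' * ρ = (s^2) • (ρ * Λ') := conjR hΛi1 hΛi2 hρΛ
  have cρΛ : ρ * Λ' = (s^2)⁻¹ • (Λ' * ρ) := flip hs2 cΛρ
  have cvΛ : v * Λ' = (s^2) • (Λ' * v) := conjR hv1 hv2 cΛx0
  -- ρ and ρ' commute with v, xm
  have cvρ1 : v * ρ = (1:K) • (ρ * v) := conjR hv1 hv2 (by rw [one_smul, hρx0])
  have cvρ : v * ρ = ρ * v := by rw [cvρ1, one_smul]
  have cρ'xm1 : ρ' * xm = (1:K) • (xm * ρ') := conjR hρi1 hρi2 (by rw [one_smul, ← hρxm])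
  have cxmρ' : xm * ρ' = ρ' * xm := by rw [cρ'xm1, one_smul]
  have cρ'v1 : ρ' * v = (1:K) • (v * ρ') := conjR hρi1 hρi2 (by rw [one_smul, cvρ])
  have cvρ' : v * ρ' = ρ' * v := by rw [cρ'v1, one_smul]
  -- tail (push) lemmas
  have pxpΛ : ∀ y : A, xp * (Λ' * y) = (s^2)⁻¹ • (Λ' * (xp * y)) := fun y => by
    rw [swap_tail cxpΛ y, mul_assoc]
  have pxmΛ : ∀ y : A, xm * (Λ' * y) = (s^2)⁻¹ • (Λ' * (xm * y)) := fun y => by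
    rw [swap_tail cxmΛ y, mul_assoc]
  have pρΛ : ∀ y : A, ρ * (Λ' * y) = (s^2)⁻¹ • (Λ' * (ρ * y)) := fun y => by
    rw [swap_tail cρΛ y, mul_assoc]
  have pvΛ : ∀ y : A, v * (Λ' * y) = (s^2) • (Λ' * (v * y)) := fun y => by
    rw [swap_tail cvΛ y, mul_assoc]
  have pxmv : ∀ y : A, xm * (v * y) = (s^2)⁻¹ • (v * (xm * y)) := fun y => by
    rw [swap_tail cxmv y, mul_assoc]
  have pxpv : ∀ y : A, xp * (v * y) = (s^2) • (v * (xp * y)) := fun y => by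
    rw [swap_tail cxpv y, mul_assoc]
  have pxmx0 : ∀ y : A, xm * (x0 * y) = (s^2) • (x0 * (xm * y)) := fun y => by
    rw [swap_tail hx1 y, mul_assoc]
  have pxmρ' : ∀ y : A, xm * (ρ' * y) = ρ' * (xm * y) := fun y => by
    rw [← mul_assoc, cxmρ', mul_assoc]
  have pvρ' : ∀ y : A, v * (ρ' * y) = ρ' * (v * y) := fun y => by
    rw [← mul_assoc, cvρ', mul_assoc]
  have pΛΛ : ∀ y : A, Λ * (Λ' * y) = y := fun y => by rw [← mul_assoc, hΛi1, one_mul]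
  have pρρ' : ∀ y : A, ρ * (ρ' * y) = y := fun y => by rw [← mul_assoc, hρi1, one_mul]
  have pρ'ρ : ∀ y : A, ρ' * (ρ * y) = y := fun y => by rw [← mul_assoc, hρi2, one_mul]
  have pvx0 : ∀ y : A, v * (x0 * y) = y := fun y => by rw [← mul_assoc, hv2, one_mul]
  have px0v : ∀ y : A, x0 * (v * y) = y := fun y => by rw [← mul_assoc, hv1, one_mul]
  have h3 : xp * xm = (s - s⁻¹) • (x0 * x0) + xm * xp := by
    rw [← hx3]; abel
  have pcomm : ∀ y : A, xp * (xm * y) = (s - s⁻¹) • (x0 * (x0 * y)) + xm * (xp * y) :=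
    fun y => by rw [← mul_assoc, h3, add_mul, smul_mul_assoc, mul_assoc, mul_assoc]
  -- the three frame products
  have E1 : lm * θm = ((s - s⁻¹)⁻¹ * s^2 * s^2) • (v * (v * (xp * ξm))) := by
    rw [hlm, hθm]
    simp only [smul_smul, mul_smul_comm, smul_mul_assoc, mul_add, mul_sub, mul_neg,
      smul_add, smul_sub, smul_neg, neg_smul, neg_mul, neg_neg, mul_assoc, pxpΛ, pvΛ, pΛΛ, pxpv]
    match_scalars
    all_goals (try field_simp)
    all_goals ring
  have E2 : l0 * θ0 = (-((s - s⁻¹)⁻¹ * s^2 * (s^2 + 1))) • (v * (v * (xp * ξm)))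
      + (-((s - s⁻¹)⁻¹ * s)) • (v * ξ0) := by
    rw [hl0, hθ0]
    simp only [smul_smul, mul_smul_comm, smul_mul_assoc, mul_add, mul_sub, mul_neg,
      smul_add, smul_sub, smul_neg, neg_smul, neg_mul, neg_neg, mul_assoc, pρΛ, pvΛ, pΛΛ, pρρ', pxpv]
    match_scalars
    all_goals (try field_simp)
    all_goals ring
  have E3 : lp * θp = ((s - s⁻¹)⁻¹ * s * (s^2 + 1)) • (ρ' * (ρ' * (v * (v * (xm * (xp * (xp * ξm)))))))
      + ((s - s⁻¹)⁻¹ * (s^2 + 1)) • (ρ' * (ρ' * (v * (xm * (xp * ξ0)))))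
      + (-((s - s⁻¹)⁻¹ * s^2)) • (ρ' * (ρ' * (xm * ξp))) := by
    rw [hlp, hθp]
    simp only [smul_smul, mul_smul_comm, smul_mul_assoc, mul_add, mul_sub, mul_neg,
      smul_add, smul_sub, smul_neg, neg_smul, neg_mul, neg_neg, mul_assoc, pxmΛ, pvΛ, pΛΛ, pxmρ', pvρ',
      pxmv, pxmx0, pvx0]
    match_scalars
    all_goals (try field_simp)
    all_goals ring
  -- multiplying by ρ² and expanding
  have F1 : ρ * (ρ * (v * (v * (xp * ξm)))) =
      (s⁻¹ + s) • (v * (v * (xm * (xp * (xp * ξm))))) + (s^2) • (xp * ξm) := by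
    rw [← mul_assoc, hρ2]
    simp only [smul_smul, mul_smul_comm, smul_mul_assoc, mul_add, add_mul, mul_sub, mul_neg,
      smul_add, smul_sub, smul_neg, neg_smul, neg_mul, neg_neg, mul_assoc, pxpv, pxmv, px0v, pvx0, pcomm]
    match_scalars
    all_goals (try field_simp)
    all_goals ring
  have F2 : ρ * (ρ * (v * ξ0)) =
      (s⁻¹ + s) • (v * (xm * (xp * ξ0))) + (s^2) • (x0 * ξ0) := by
    rw [← mul_assoc, hρ2]
    simp only [smul_smul, mul_smul_comm, smul_mul_assoc, mul_add, add_mul, mul_sub, mul_neg,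
      smul_add, smul_sub, smul_neg, neg_smul, neg_mul, neg_neg, mul_assoc, pxpv, pxmv, px0v, pvx0, pcomm]
    match_scalars
    all_goals (try field_simp)
    all_goals ring
  have main : ρ * (ρ * (lm * θm + l0 * θ0 + lp * θp)) = (-((s^2-1)⁻¹ * (s^2)^2)) • η := by
    rw [E1, E2, E3, hη]
    simp only [smul_smul, mul_smul_comm, smul_mul_assoc, mul_add, mul_sub, mul_neg,
      smul_add, smul_sub, smul_neg, neg_smul, neg_mul, neg_neg, mul_assoc, pρρ']
    rw [F1, F2]
    simp only [smul_smul, mul_smul_comm, smul_mul_assoc, smul_add, smul_sub, smul_neg, neg_smul]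
    match_scalars
    all_goals (try field_simp)
    all_goals ring
  have cancel : ∀ X : A, ρ' * (ρ' * (ρ * (ρ * X))) = X := fun X => by
    rw [pρ'ρ (ρ * X), pρ'ρ X]
  calc -(lm * θm + l0 * θ0 + lp * θp)
      = ρ' * (ρ' * (ρ * (ρ * (-(lm * θm + l0 * θ0 + lp * θp))))) := (cancel _).symm
    _ = ((s^2 - 1)⁻¹ * (s^2) ^ 2) • (ρ' * ρ' * η) := by
        simp only [mul_neg, main, neg_smul, neg_neg, mul_smul_comm, mul_assoc]
end

section
/- The frame elements satisfy the same exterior-algebra commutation relations as the 1-forms ξ^i: (θ⁻)² = 0, (θ⁺)² = 0, (θ⁰)² = h·θ⁻θ⁺, θ⁻θ⁰ = −q⁻¹·θ⁰θ⁻, θ⁰θ⁺ = −q⁻¹·θ⁺θ⁰, and θ⁻θ⁺ = −θ⁺θ⁻. -/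
set_option maxHeartbeats 40000000
set_option maxRecDepth 8000

theorem stmt18 {K A : Type*} [Field K] [CharZero K] [Ring A] [Algebra K A]
    (q s : K) (hq : q ≠ 0) (hs : s ≠ 0) (hsq : s ^ 2 = q)
    (xm x0 xp : A)
    (hx1 : xm * x0 = q • (x0 * xm))
    (hx2 : xp * x0 = q⁻¹ • (x0 * xp))
    (hx3 : xp * xm - xm * xp = (s - s⁻¹) • (x0 * x0))
    (hh : s - s⁻¹ ≠ 0)
    (α : K) (hα : α ≠ 0)
    (ξm ξ0 ξp : A)
    (hc1 : xm * ξm = (q ^ 2) • (ξm * xm))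
    (hc2 : x0 * ξm = q • (ξm * x0))
    (hc3 : xp * ξm = ξm * xp)
    (hc4 : xm * ξ0 = q • (ξ0 * xm) + (q ^ 2 - 1) • (ξm * x0))
    (hc5 : x0 * ξ0 = q • (ξ0 * x0) - ((s - s⁻¹) * (q + 1)) • (ξm * xp))
    (hc6 : xp * ξ0 = q • (ξ0 * xp))
    (hc7 : xm * ξp = ξp * xm - ((s - s⁻¹) * (q + 1)) • (ξ0 * x0) + ((s - s⁻¹) ^ 2 * (q + 1)) • (ξm * xp))
    (hc8 : x0 * ξp = q • (ξp * x0) + (q ^ 2 - 1) • (ξ0 * xp))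
    (hc9 : xp * ξp = (q ^ 2) • (ξp * xp))
    (he1 : ξm * ξm = 0)
    (he2 : ξp * ξp = 0)
    (he3 : ξ0 * ξ0 = (s - s⁻¹) • (ξm * ξp))
    (he4 : ξm * ξ0 = -q⁻¹ • (ξ0 * ξm))
    (he5 : ξ0 * ξp = -q⁻¹ • (ξp * ξ0))
    (he6 : ξm * ξp = -(ξp * ξm))
    (v ρ ρ' Λ Λ' : A)
    (hv1 : x0 * v = 1) (hv2 : v * x0 = 1)
    (hρ2 : ρ * ρ = s⁻¹ • (xm * xp) + x0 * x0 + s • (xp * xm))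
    (hρxm : ρ * xm = xm * ρ) (hρx0 : ρ * x0 = x0 * ρ) (hρxp : ρ * xp = xp * ρ)
    (hρi1 : ρ * ρ' = 1) (hρi2 : ρ' * ρ = 1)
    (hΛi1 : Λ * Λ' = 1) (hΛi2 : Λ' * Λ = 1)
    (hΛxm : xm * Λ = q • (Λ * xm)) (hΛx0 : x0 * Λ = q • (Λ * x0)) (hΛxp : xp * Λ = q • (Λ * xp))
    (hρΛ : ρ * Λ = q • (Λ * ρ))
    (hξΛm : ξm * Λ = q • (Λ * ξm)) (hξΛ0 : ξ0 * Λ = q • (Λ * ξ0)) (hξΛp : ξp * Λ = q • (Λ * ξp))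
    (hρξm : ρ * ξm = q • (ξm * ρ)) (hρξ0 : ρ * ξ0 = q • (ξ0 * ρ)) (hρξp : ρ * ξp = q • (ξp * ρ))
    (θm θ0 θp : A)
    (hθm : θm = α⁻¹ • (Λ' * v * ξm))
    (hθ0 : θ0 = α⁻¹ • (Λ' * ρ' * ((s * (q + 1)) • (v * xp * ξm) + ξ0)))
    (hθp : θp = α⁻¹ • (Λ' * (ρ' * ρ') * ((-(s * q * (q + 1))) • (v * (xp * xp) * ξm) - (q + 1) • (xp * ξ0) + x0 * ξp))) :
    θm * θm = 0 ∧ θp * θp = 0 ∧ θ0 * θ0 = (s - s⁻¹) • (θm * θp) ∧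
    θm * θ0 = -q⁻¹ • (θ0 * θm) ∧ θ0 * θp = -q⁻¹ • (θp * θ0) ∧
    θm * θp = -(θp * θm) := by
  subst hsq hθm hθ0 hθp
  -- chaining helper
  have chain : ∀ {a b c : A}, a * b = c → ∀ t : A, a * (b * t) = c * t :=
    fun h t => by rw [← mul_assoc, h]
  have conjv : ∀ a b : A, x0 * a = b → a * v = v * (b * v) := by
    intro a b hab
    rw [← hab, ← mul_assoc, ← mul_assoc, hv2, one_mul]
  have conjρ : ∀ a b : A, ρ * a = b → a * ρ' = ρ' * (b * ρ') := by
    intro a b hab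
    rw [← hab, ← mul_assoc, ← mul_assoc, hρi2, one_mul]
  have conjΛ : ∀ (c : K) (a : A), a * Λ = c • (Λ * a) → Λ' * a = c • (a * Λ') := by
    intro c a hab
    calc Λ' * a = Λ' * a * (Λ * Λ') := by rw [hΛi1, mul_one]
    _ = Λ' * (a * Λ) * Λ' := by rw [← mul_assoc, mul_assoc Λ' a Λ]
    _ = c • ((Λ' * Λ) * a * Λ') := by
        rw [hab, mul_smul_comm, smul_mul_assoc, ← mul_assoc]
    _ = c • (a * Λ') := by rw [hΛi2, one_mul]
  -- basic reorientations
  have hx2' : x0 * xp = (s^2) • (xp * x0) := by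
    rw [hx2]; match_scalars <;> field_simp
  have r6 : ξm * x0 = (s^2)⁻¹ • (x0 * ξm) := by
    rw [hc2]; match_scalars <;> field_simp
  have r7 : ξm * xp = xp * ξm := hc3.symm
  have r9 : ξ0 * x0 = (s^2)⁻¹ • (x0 * ξ0) + ((s^2)⁻¹*(s-s⁻¹)*(s^2+1)) • (xp * ξm) := by
    rw [hc5, hc3]; match_scalars <;> field_simp <;> ring
  have r10 : ξ0 * xp = (s^2)⁻¹ • (xp * ξ0) := by
    rw [hc6]; match_scalars <;> field_simp
  have r12 : ξp * x0 = (s^2)⁻¹ • (x0 * ξp) - ((s^4)⁻¹*(s^4-1)) • (xp * ξ0) := by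
    rw [hc8, r10]; match_scalars <;> field_simp <;> ring
  have r13 : ξp * xp = (s^4)⁻¹ • (xp * ξp) := by
    rw [hc9]; match_scalars <;> field_simp <;> ring
  have r17 : ξ0 * ξm = (-(s^2)) • (ξm * ξ0) := by
    rw [he4]; match_scalars <;> field_simp
  have r18 : ξp * ξ0 = (-(s^2)) • (ξ0 * ξp) := by
    rw [he5]; match_scalars <;> field_simp
  have r19 : ξp * ξm = -(ξm * ξp) := by rw [he6, neg_neg]
  -- v rules
  have r4 : xp * v = (s^2) • (v * xp) := by
    rw [conjv xp _ hx2']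
    simp only [smul_mul_assoc, mul_smul_comm, mul_assoc, hv1, mul_one]
  have r5 : ξm * v = (s^2) • (v * ξm) := by
    rw [conjv ξm _ hc2]
    simp only [smul_mul_assoc, mul_smul_comm, mul_assoc, hv1, mul_one]
  have r8 : ξ0 * v = (s^2) • (v * ξ0)
      - ((s-s⁻¹)*(s^2+1)*s^4) • (v * (v * (xp * ξm))) := by
    rw [conjv ξ0 _ hc5]
    simp only [sub_mul, smul_mul_assoc, mul_smul_comm, smul_smul, mul_assoc, hv1, mul_one,
      chain r7, chain r4, r7, r4, chain r5, r5, mul_sub, smul_sub]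
    match_scalars <;> field_simp <;> ring
  have r11 : ξp * v = (s^2) • (v * ξp) + (s^2*(s^4-1)) • (v * (v * (xp * ξ0)))
      - (s^6*(s^4-1)*(s-s⁻¹)*(s^2+1)) • (v * (v * (v * (xp * (xp * ξm))))) := by
    rw [conjv ξp _ hc8]
    simp only [add_mul, smul_mul_assoc, mul_smul_comm, smul_smul, mul_assoc, hv1, mul_one,
      chain r7, r7, chain r4, r4, chain r5, r5, chain r8, r8, chain r10, r10,
      mul_add, smul_add, mul_sub, smul_sub, sub_mul]
    match_scalars <;> field_simp <;> ring
  -- ρ' rules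
  have hρv : ρ * v = v * ρ := by
    rw [conjv ρ _ hρx0.symm, mul_assoc, hv1, mul_one]
  have r20 : v * ρ' = ρ' * v := by
    rw [conjρ v _ hρv, mul_assoc, hρi1, mul_one]
  have r21 : x0 * ρ' = ρ' * x0 := by
    rw [conjρ x0 _ hρx0, mul_assoc, hρi1, mul_one]
  have r22 : xp * ρ' = ρ' * xp := by
    rw [conjρ xp _ hρxp, mul_assoc, hρi1, mul_one]
  have r23 : ξm * ρ' = (s^2) • (ρ' * ξm) := by
    rw [conjρ ξm _ hρξm]
    simp only [smul_mul_assoc, mul_smul_comm, mul_assoc, hρi1, mul_one]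
  have r24 : ξ0 * ρ' = (s^2) • (ρ' * ξ0) := by
    rw [conjρ ξ0 _ hρξ0]
    simp only [smul_mul_assoc, mul_smul_comm, mul_assoc, hρi1, mul_one]
  have r25 : ξp * ρ' = (s^2) • (ρ' * ξp) := by
    rw [conjρ ξp _ hρξp]
    simp only [smul_mul_assoc, mul_smul_comm, mul_assoc, hρi1, mul_one]
  -- Λ' rules
  have r27 : x0 * Λ' = (s^2)⁻¹ • (Λ' * x0) := by
    rw [conjΛ (s^2) x0 hΛx0]; match_scalars <;> field_simp
  have r28 : xp * Λ' = (s^2)⁻¹ • (Λ' * xp) := by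
    rw [conjΛ (s^2) xp hΛxp]; match_scalars <;> field_simp
  have r29 : ξm * Λ' = (s^2)⁻¹ • (Λ' * ξm) := by
    rw [conjΛ (s^2) ξm hξΛm]; match_scalars <;> field_simp
  have r30 : ξ0 * Λ' = (s^2)⁻¹ • (Λ' * ξ0) := by
    rw [conjΛ (s^2) ξ0 hξΛ0]; match_scalars <;> field_simp
  have r31 : ξp * Λ' = (s^2)⁻¹ • (Λ' * ξp) := by
    rw [conjΛ (s^2) ξp hξΛp]; match_scalars <;> field_simp
  have hΛv : Λ * v = (s^2) • (v * Λ) := by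
    rw [conjv Λ _ hΛx0]
    simp only [smul_mul_assoc, mul_smul_comm, mul_assoc, hv1, mul_one]
  have hvΛ : v * Λ = (s^2)⁻¹ • (Λ * v) := by
    rw [hΛv]; match_scalars <;> field_simp
  have r26 : v * Λ' = (s^2) • (Λ' * v) := by
    rw [conjΛ ((s^2)⁻¹) v hvΛ]; match_scalars <;> field_simp
  have hΛρ' : Λ * ρ' = (s^2) • (ρ' * Λ) := by
    rw [conjρ Λ _ hρΛ]
    simp only [smul_mul_assoc, mul_smul_comm, mul_assoc, hρi1, mul_one]
  have hρ'Λ : ρ' * Λ = (s^2)⁻¹ • (Λ * ρ') := by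
    rw [hΛρ']; match_scalars <;> field_simp
  have r32 : ρ' * Λ' = (s^2) • (Λ' * ρ') := by
    rw [conjΛ ((s^2)⁻¹) ρ' hρ'Λ]; match_scalars <;> field_simp
  refine ⟨?_, ?_, ?_, ?_, ?_, ?_⟩ <;>
  · simp only [mul_assoc, smul_mul_assoc, mul_smul_comm, smul_smul, mul_add, add_mul,
      mul_sub, sub_mul, smul_add, smul_sub, neg_mul, mul_neg, neg_smul, smul_neg, neg_neg,
      mul_one, one_mul, mul_zero, zero_mul, smul_zero, add_zero, zero_add,
      hx2, chain hx2, hv1, chain hv1, hv2, chain hv2,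
      r4, chain r4, r5, chain r5, r6, chain r6, r7, chain r7, r8, chain r8,
      r9, chain r9, r10, chain r10, r11, chain r11, r12, chain r12, r13, chain r13,
      he1, chain he1, he2, chain he2, he3, chain he3,
      r17, chain r17, r18, chain r18, r19, chain r19,
      r20, chain r20, r21, chain r21, r22, chain r22, r23, chain r23, r24, chain r24,
      r25, chain r25, r26, chain r26, r27, chain r27, r28, chain r28, r29, chain r29,
      r30, chain r30, r31, chain r31, r32, chain r32]
    try rfl
    try (match_scalars <;> (try field_simp; try ring1))
    all_goals (ring_nf; field_simp; try ring1; try ring_nf; try field_simp; try ring1; try ring_nf)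
    all_goals (rw [div_add' _ _ _ (by simp [hs, hα]), div_mul_eq_mul_div, eq_div_iff (by simp [hs, hα])]; ring1)
end
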